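/- arXiv:2312.13972 — 5 statements merged into one kernel-verified Lean document; each statement's English description precedes it below -/
import Mathlib

section
/- Let n ≥ 6 and let T be a tree on n vertices. Then T contains a vertex x with neighbours v_1, …, v_k such that the component T_x(xv_k) of T − xv_k containing x has at least 2⌈√n⌉ − 1 vertices, and for each i ∈ {1, …, k−1}, the component T_{v_i}(xv_i) containing v_i after deleting edge xv_i has fewer than 2⌈√n⌉ − 1 vertices. -/
open SimpleGraph

/-- `x` is a burning sequence for `G`: every vertex is within distance `k - i`
of the source `x i` burned in round `i` (0-indexed: `k - 1 - i`). -/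
def IsBurningSeq {V : Type*} (G : SimpleGraph V) {k : ℕ} (x : Fin k → V) : Prop :=
  ∀ v : V, ∃ i : Fin k, G.dist v (x i) ≤ k - 1 - (i : ℕ)

/-- The burning number of `G`. -/
noncomputable def burnNum {V : Type*} (G : SimpleGraph V) : ℕ :=
  sInf {k : ℕ | ∃ x : Fin k → V, IsBurningSeq G x}


/-- The number of vertices of the component containing x after deleting the edge xy. -/
noncomputable def branchCard {V : Type*} (G : SimpleGraph V) (x y : V) : ℕ :=
  ((G.deleteEdges {s(x, y)}).connectedComponentMk x).supp.ncard

private lemma reach_aux {V : Type*} (T : SimpleGraph V) (x y : V) {w z : V} (p : T.Walk w z) :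
    (T.deleteEdges {s(x,y)}).Reachable w z ∨
    ((T.deleteEdges {s(x,y)}).Reachable w x ∧ (T.deleteEdges {s(x,y)}).Reachable z y) ∨
    ((T.deleteEdges {s(x,y)}).Reachable w y ∧ (T.deleteEdges {s(x,y)}).Reachable z x) := by
  induction p with
  | nil => exact Or.inl (Reachable.refl _)
  | @cons a b c h q ih =>
    by_cases he : s(a, b) = s(x, y)
    · rw [Sym2.eq_iff] at he
      rcases he with ⟨rfl, rfl⟩ | ⟨rfl, rfl⟩
      · rcases ih with h1 | ⟨h1, h2⟩ | ⟨h1, h2⟩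
        · exact Or.inr (Or.inl ⟨Reachable.refl _, h1.symm⟩)
        · exact Or.inr (Or.inl ⟨Reachable.refl _, h2⟩)
        · exact Or.inl h2.symm
      · rcases ih with h1 | ⟨h1, h2⟩ | ⟨h1, h2⟩
        · exact Or.inr (Or.inr ⟨Reachable.refl _, h1.symm⟩)
        · exact Or.inl h2.symm
        · exact Or.inr (Or.inr ⟨Reachable.refl _, h2⟩)
    · have hadj : (T.deleteEdges {s(x,y)}).Adj a b := by simp [h, he]
      rcases ih with h1 | ⟨h1, h2⟩ | ⟨h1, h2⟩
      · exact Or.inl (hadj.reachable.trans h1)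
      · exact Or.inr (Or.inl ⟨hadj.reachable.trans h1, h2⟩)
      · exact Or.inr (Or.inr ⟨hadj.reachable.trans h1, h2⟩)

private lemma reach_or {V : Type*} (T : SimpleGraph V) (x y : V) {w : V} (p : T.Walk w x) :
    (T.deleteEdges {s(x,y)}).Reachable w x ∨ (T.deleteEdges {s(x,y)}).Reachable w y := by
  rcases reach_aux T x y p with h | ⟨h, _⟩ | ⟨h, _⟩
  · exact Or.inl h
  · exact Or.inl h
  · exact Or.inr h

private lemma tree_not_reach {V : Type*} {T : SimpleGraph V} (hT : T.IsTree) {x y : V}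
    (hxy : T.Adj x y) : ¬ (T.deleteEdges {s(x,y)}).Reachable x y := by
  have hb := (isAcyclic_iff_forall_adj_isBridge.mp hT.IsAcyclic) hxy
  rw [isBridge_iff] at hb
  exact hb

private lemma branchCard_def {V : Type*} (T : SimpleGraph V) (x y : V) :
    branchCard T x y = ((T.deleteEdges {s(x, y)}).connectedComponentMk x).supp.ncard := rfl

private lemma mem_branch_iff {V : Type*} (T : SimpleGraph V) (x y w : V) :
    w ∈ ((T.deleteEdges {s(x, y)}).connectedComponentMk x).supp ↔
      (T.deleteEdges {s(x, y)}).Reachable w x := by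
  rw [ConnectedComponent.mem_supp_iff, ConnectedComponent.eq]

private lemma branchCard_add {V : Type*} [Fintype V] {T : SimpleGraph V} (hT : T.IsTree)
    {x y : V} (hxy : T.Adj x y) :
    branchCard T x y + branchCard T y x = Fintype.card V := by
  have hswap : s(y, x) = s(x, y) := Sym2.eq_swap
  set G' := T.deleteEdges {s(x, y)} with hG'
  have hBy : branchCard T y x = (G'.connectedComponentMk y).supp.ncard := by
    rw [branchCard_def, hswap]
  rw [branchCard_def, hBy]
  have hdisj : Disjoint (G'.connectedComponentMk x).supp (G'.connectedComponentMk y).supp := by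
    rw [Set.disjoint_left]
    intro w hwx hwy
    rw [mem_branch_iff] at hwx
    rw [ConnectedComponent.mem_supp_iff, ConnectedComponent.eq] at hwy
    exact tree_not_reach hT hxy (hwx.symm.trans hwy)
  have hunion : (G'.connectedComponentMk x).supp ∪ (G'.connectedComponentMk y).supp = Set.univ := by
    ext w
    simp only [Set.mem_union, Set.mem_univ, iff_true]
    rw [mem_branch_iff, hG']
    rw [show (G'.connectedComponentMk y).supp = ((T.deleteEdges {s(x,y)}).connectedComponentMk y).supp from rfl]
    rw [ConnectedComponent.mem_supp_iff, ConnectedComponent.eq]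
    obtain ⟨p⟩ := (hT.isConnected.preconnected w x)
    exact reach_or T x y p
  rw [← Set.ncard_union_eq hdisj (Set.toFinite _) (Set.toFinite _), hunion, Set.ncard_univ, Nat.card_eq_fintype_card]

private lemma leaf_branchCard {V : Type*} [Fintype V] {T : SimpleGraph V} (hT : T.IsTree)
    {x y : V} (hxy : T.Adj x y)
    (hleaf : ∀ b : V, T.Adj y b → b = x) :
    branchCard T x y = Fintype.card V - 1 := by
  have h1 : branchCard T y x = 1 := by
    have hswap : s(y, x) = s(x, y) := Sym2.eq_swap
    rw [branchCard_def, hswap]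
    have : ((T.deleteEdges {s(x, y)}).connectedComponentMk y).supp = {y} := by
      ext w
      rw [ConnectedComponent.mem_supp_iff, ConnectedComponent.eq, Set.mem_singleton_iff]
      constructor
      · intro hr
        obtain ⟨p⟩ := hr.symm
        cases p with
        | nil => rfl
        | cons h q =>
          exfalso
          rw [deleteEdges_adj] at h
          obtain ⟨hadj, hne⟩ := h
          have := hleaf _ hadj
          subst this
          exact hne (by rw [Sym2.eq_swap]; exact rfl)
      · rintro rfl; exact Reachable.refl _
    rw [this, Set.ncard_singleton]
  have := branchCard_add hT hxy
  omega

private lemma branch_nested {V : Type*} [Fintype V] {T : SimpleGraph V} (hT : T.IsTree)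
    {x y v : V} (hxy : T.Adj x y) (hxv : T.Adj x v) (hvy : v ≠ y) :
    branchCard T v x < branchCard T x y := by
  classical
  have hvx_ne : s(v, x) ≠ s(x, y) := by
    intro h
    rw [Sym2.eq_iff] at h
    rcases h with ⟨rfl, rfl⟩ | ⟨rfl, -⟩
    · exact hxy.ne rfl
    · exact hvy rfl
  set G1 := T.deleteEdges {s(v, x)} with hG1
  set G2 := T.deleteEdges {s(x, y)} with hG2
  have hbr1 : ¬ G1.Reachable v x := tree_not_reach hT hxv.symm
  have hsub : (G1.connectedComponentMk v).supp ⊆ (G2.connectedComponentMk x).supp := by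
    intro w hw
    rw [ConnectedComponent.mem_supp_iff, ConnectedComponent.eq] at hw ⊢
    obtain ⟨p⟩ := hw
    -- p : G1.Walk w v
    have hxy_not : s(x, y) ∉ p.edges := by
      intro hmem
      have hxsupp : x ∈ p.support := Walk.fst_mem_support_of_mem_edges p hmem
      have h1 : G1.Reachable w v := ⟨p⟩
      have h2 : G1.Reachable w x := ⟨p.takeUntil x hxsupp⟩
      exact hbr1 (h1.symm.trans h2)
    -- transfer p to G2
    have hedges : ∀ e ∈ p.edges, e ∈ G2.edgeSet := by
      intro e he
      have h1 : e ∈ G1.edgeSet := p.edges_subset_edgeSet he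
      rw [edgeSet_deleteEdges] at h1 ⊢
      refine ⟨h1.1, ?_⟩
      intro hc
      rw [Set.mem_singleton_iff] at hc
      subst hc
      exact hxy_not he
    have q := p.transfer G2 hedges
    have hvxadj : G2.Adj v x := by
      rw [hG2, deleteEdges_adj]
      exact ⟨hxv.symm, by simpa using hvx_ne⟩
    have hq : G2.Reachable w v := ⟨q⟩
    exact hq.trans hvxadj.reachable
  have hxmem : x ∈ (G2.connectedComponentMk x).supp := by
    rw [ConnectedComponent.mem_supp_iff]
  have hxnot : x ∉ (G1.connectedComponentMk v).supp := by
    rw [ConnectedComponent.mem_supp_iff, ConnectedComponent.eq]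
    exact fun h => hbr1 h.symm
  have hss : (G1.connectedComponentMk v).supp ⊂ (G2.connectedComponentMk x).supp :=
    ⟨hsub, fun h => hxnot (h hxmem)⟩
  exact Set.ncard_lt_ncard hss (Set.toFinite _)

private lemma exists_leaf {V : Type*} [Fintype V] {T : SimpleGraph V} (hT : T.IsTree)
    (hn : 2 ≤ Fintype.card V) :
    ∃ x y : V, T.Adj x y ∧ ∀ b : V, T.Adj y b → b = x := by
  classical
  -- there is a vertex of degree 1
  have hcard : T.edgeFinset.card + 1 = Fintype.card V := hT.card_edgeFinset
  have hsum : ∑ v, T.degree v = 2 * (Fintype.card V - 1) := by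
    rw [T.sum_degrees_eq_twice_card_edges]
    omega
  have hdegpos : ∀ v : V, 1 ≤ T.degree v := by
    intro v
    obtain ⟨u, hu⟩ := Fintype.exists_ne_of_one_lt_card (by omega) v
    obtain ⟨p⟩ := hT.isConnected.preconnected v u
    cases p with
    | nil => exact absurd rfl hu.symm
    | cons h q =>
      rw [Nat.one_le_iff_ne_zero, ← Nat.pos_iff_ne_zero, T.degree_pos_iff_exists_adj]
      exact ⟨_, h⟩
  have : ∃ y : V, T.degree y = 1 := by
    by_contra hno
    push_neg at hno
    have h2 : ∀ v : V, 2 ≤ T.degree v := by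
      intro v
      have := hdegpos v
      have := hno v
      omega
    have : 2 * Fintype.card V ≤ ∑ v, T.degree v := by
      calc 2 * Fintype.card V = ∑ _v : V, 2 := by
            rw [Finset.sum_const, Finset.card_univ]; ring
        _ ≤ ∑ v, T.degree v := Finset.sum_le_sum fun v _ => h2 v
    omega
  obtain ⟨y, hy⟩ := this
  have : 0 < T.degree y := by omega
  rw [T.degree_pos_iff_exists_adj] at this
  obtain ⟨x, hx⟩ := this
  refine ⟨x, y, hx.symm, ?_⟩
  intro b hb
  have hbx : b ∈ T.neighborFinset y := by rwa [mem_neighborFinset]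
  have hxx : x ∈ T.neighborFinset y := by rwa [mem_neighborFinset]
  rw [← card_neighborFinset_eq_degree] at hy
  obtain ⟨a, ha⟩ := Finset.card_eq_one.mp hy
  rw [ha, Finset.mem_singleton] at hbx hxx
  rw [hbx, hxx]

private lemma sqrt_bound {n : ℕ} (hn : 6 ≤ n) : 2 * ⌈Real.sqrt n⌉₊ ≤ n := by
  have hk : ⌈Real.sqrt n⌉₊ ≤ n / 2 := by
    rw [Nat.ceil_le]
    have hnat : n ≤ (n / 2) ^ 2 := by
      have h1 : 2 * (n / 2) ≤ n := by omega
      have h2 : n ≤ 2 * (n / 2) + 1 := by omega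
      have h3 : 3 ≤ n / 2 := by omega
      nlinarith
    calc Real.sqrt n ≤ Real.sqrt (((n / 2 : ℕ) : ℝ) ^ 2) := by
          apply Real.sqrt_le_sqrt
          exact_mod_cast (by exact_mod_cast hnat : (n : ℝ) ≤ ((n / 2 : ℕ) ^ 2 : ℕ))
      _ = ((n / 2 : ℕ) : ℝ) := Real.sqrt_sq (by positivity)
  omega


/-- Any tree on n ≥ 6 vertices contains a vertex x with a neighbour y such that
T_x(xy) has at least 2⌈√n⌉ - 1 vertices while T_v(xv) has fewer than
2⌈√n⌉ - 1 vertices for every other neighbour v of x. -/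
theorem the_right_bridge {V : Type*} [Fintype V] (T : SimpleGraph V) (hT : T.IsTree)
    (hn : 6 ≤ Fintype.card V) :
    ∃ x y : V, T.Adj x y ∧
      2 * ⌈Real.sqrt (Fintype.card V)⌉₊ - 1 ≤ branchCard T x y ∧
      ∀ v : V, T.Adj x v → v ≠ y →
        branchCard T v x < 2 * ⌈Real.sqrt (Fintype.card V)⌉₊ - 1 := by
  classical
  set n := Fintype.card V with hn_def
  set m := 2 * ⌈Real.sqrt n⌉₊ - 1 with hm_def
  have h2k : 2 * ⌈Real.sqrt n⌉₊ ≤ n := sqrt_bound hn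
  set S : Set ℕ := {c | ∃ a b : V, T.Adj a b ∧ m ≤ branchCard T a b ∧ branchCard T a b = c}
    with hS_def
  have hSne : S.Nonempty := by
    obtain ⟨a, b, hab, hleaf⟩ := exists_leaf hT (by omega)
    have := leaf_branchCard hT hab hleaf
    exact ⟨branchCard T a b, a, b, hab, by omega, rfl⟩
  obtain ⟨a, b, hab, hm, hc⟩ := Nat.sInf_mem hSne
  refine ⟨a, b, hab, hm, ?_⟩
  intro v hav hvb
  by_contra hcon
  push_neg at hcon
  have hmem : branchCard T v a ∈ S := ⟨v, a, hav.symm, hcon, rfl⟩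
  have hle : sInf S ≤ branchCard T v a := Nat.sInf_le hmem
  have hlt : branchCard T v a < branchCard T a b := branch_nested hT hab hav hvb
  omega
end

section
/- The burning number of the path on n vertices equals ⌈√n⌉. -/
open SimpleGraph

/-!
A source burned in round `i` of `k` covers at most `2 (k - i) + 1` consecutive vertices of the
path, and these odd numbers sum to `k ^ 2`; so `n ≤ k ^ 2`. Conversely, cutting the path into
consecutive blocks of `2k - 1, 2k - 3, …, 1` vertices and burning their midpoints in this order
burns it in `k` rounds. Hence `b(Pₙ)` is the least `k` with `n ≤ k ^ 2`, namely `⌈√n⌉`.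
-/

open Finset

namespace SimpleGraph

lemma pathGraph_dist_le_of_val_eq_add {n d : ℕ} {u v : Fin n} (h : (v : ℕ) = u + d) :
    (pathGraph n).dist u v ≤ d := by
  induction d generalizing v with
  | zero => simp [Fin.ext h]
  | succ d ih =>
    let w : Fin n := ⟨u + d, by omega⟩
    have hwv : (pathGraph n).Adj w v := pathGraph_adj.2 (Or.inl (by simp [w, h]; omega))
    calc (pathGraph n).dist u v ≤ (pathGraph n).dist u w + (pathGraph n).dist w v :=
          (pathGraph_preconnected n w v).dist_triangle_right u
      _ ≤ d + 1 := add_le_add (ih rfl) (by simpa using dist_le hwv.toWalk)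

lemma natDist_le_length_of_pathGraph_walk {n : ℕ} {u v : Fin n} (p : (pathGraph n).Walk u v) :
    Nat.dist u v ≤ p.length := by
  induction p with
  | nil => simp
  | cons h _ ih =>
    have := pathGraph_adj.1 h
    rw [Walk.length_cons]
    unfold Nat.dist at *
    omega

theorem pathGraph_dist {n : ℕ} (u v : Fin n) : (pathGraph n).dist u v = Nat.dist u v := by
  obtain ⟨p, hp⟩ := (pathGraph_preconnected n u v).exists_walk_length_eq_dist
  refine le_antisymm ?_ (hp ▸ natDist_le_length_of_pathGraph_walk p)
  rcases le_total (u : ℕ) v with h | h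
  · rw [Nat.dist_eq_sub_of_le h]
    exact pathGraph_dist_le_of_val_eq_add (by omega)
  · rw [dist_comm, Nat.dist_eq_sub_of_le_right h]
    exact pathGraph_dist_le_of_val_eq_add (by omega)

end SimpleGraph

lemma Fin.card_filter_natDist_le {n : ℕ} (c : Fin n) (r : ℕ) :
    #{v : Fin n | Nat.dist v c ≤ r} ≤ 2 * r + 1 := by
  calc #{v : Fin n | Nat.dist v c ≤ r} ≤ #(Icc ((c : ℕ) - r) (c + r)) := by
        refine card_le_card_of_injOn Fin.val (fun v hv => ?_) Fin.val_injective.injOn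
        simp only [coe_filter, mem_univ, true_and, Set.mem_ofPred_eq] at hv
        unfold Nat.dist at hv
        simp only [coe_Icc, Set.mem_Icc]
        omega
    _ ≤ 2 * r + 1 := by rw [Nat.card_Icc]; omega

lemma sum_range_two_mul_add_one (k : ℕ) : ∑ i ∈ range k, (2 * i + 1) = k ^ 2 := by
  induction k with
  | zero => simp
  | succ k ih => rw [sum_range_succ, ih]; ring

lemma IsBurningSeq.card_le_sum {V : Type*} [Fintype V] {G : SimpleGraph V} {k : ℕ}
    {x : Fin k → V} (hx : IsBurningSeq G x) :
    Fintype.card V ≤ ∑ i : Fin k, #{v | G.dist v (x i) ≤ k - 1 - i} := by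
  classical
  calc Fintype.card V = #(univ : Finset V) := card_univ.symm
    _ ≤ #(univ.biUnion fun i : Fin k => {v | G.dist v (x i) ≤ k - 1 - i}) :=
        card_le_card fun v _ => by simpa using hx v
    _ ≤ _ := card_biUnion_le

lemma IsBurningSeq.le_sq_of_pathGraph {n k : ℕ} {x : Fin k → Fin n}
    (hx : IsBurningSeq (pathGraph n) x) : n ≤ k ^ 2 := by
  calc n = Fintype.card (Fin n) := (Fintype.card_fin n).symm
    _ ≤ ∑ i : Fin k, #{v | (pathGraph n).dist v (x i) ≤ k - 1 - i} := hx.card_le_sum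
    _ ≤ ∑ i : Fin k, (2 * (k - 1 - i) + 1) := sum_le_sum fun i _ => by
        simpa only [pathGraph_dist] using Fin.card_filter_natDist_le (x i) (k - 1 - i)
    _ = ∑ i : Fin k, (2 * (i : ℕ) + 1) :=
        Fintype.sum_equiv Fin.revPerm _ _ fun i => by
          simp only [Fin.revPerm_apply, Fin.val_rev]; omega
    _ = k ^ 2 := by rw [Fin.sum_univ_eq_sum_range (fun i => 2 * i + 1), sum_range_two_mul_add_one]

/-- Every `v < k ^ 2` lies in one of the blocks `[k ^ 2 - (m + 1) ^ 2, k ^ 2 - m ^ 2)`, of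
`2 m + 1` vertices each; `m = ⌊√(k ^ 2 - 1 - v)⌋` picks it. -/
lemma exists_natDist_le_of_lt_sq {k v : ℕ} (hv : v < k ^ 2) :
    ∃ m < k, Nat.dist v (k ^ 2 - (m + 1) ^ 2 + m) ≤ m := by
  set m := Nat.sqrt (k ^ 2 - 1 - v)
  have hm_sq : m ^ 2 ≤ k ^ 2 - 1 - v := Nat.sqrt_le' _
  have hm_succ_sq : k ^ 2 - 1 - v < (m + 1) ^ 2 := Nat.lt_succ_sqrt' _
  have hmk : m < k := by
    by_contra! hkm
    have := Nat.pow_le_pow_left hkm 2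
    omega
  have := Nat.pow_le_pow_left hmk 2
  have : (m + 1) ^ 2 = m ^ 2 + 2 * m + 1 := by ring
  refine ⟨m, hmk, ?_⟩
  unfold Nat.dist
  omega

lemma exists_isBurningSeq_pathGraph_of_le_sq {n k : ℕ} (hn : 0 < n) (hnk : n ≤ k ^ 2) :
    ∃ x : Fin k → Fin n, IsBurningSeq (pathGraph n) x := by
  -- round `i` burns the centre of the block of `2 (k - 1 - i) + 1` vertices, pulled back onto
  -- the path if the block lies beyond its end
  refine ⟨fun i => ⟨min (k ^ 2 - (k - i) ^ 2 + (k - 1 - i)) (n - 1), by omega⟩, fun v => ?_⟩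
  obtain ⟨m, hmk, hm⟩ := exists_natDist_le_of_lt_sq (v.2.trans_le hnk)
  refine ⟨⟨k - 1 - m, by omega⟩, ?_⟩
  rw [pathGraph_dist]
  simp only [show k - (k - 1 - m) = m + 1 by omega, show k - 1 - (k - 1 - m) = m by omega]
  have := v.2
  unfold Nat.dist at *
  omega

lemma exists_isBurningSeq_pathGraph_iff {n k : ℕ} (hn : 0 < n) :
    (∃ x : Fin k → Fin n, IsBurningSeq (pathGraph n) x) ↔ n ≤ k ^ 2 :=
  ⟨fun ⟨_, hx⟩ => hx.le_sq_of_pathGraph, exists_isBurningSeq_pathGraph_of_le_sq hn⟩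

lemma Nat.ceil_sqrt_le_iff {n k : ℕ} : ⌈√(n : ℝ)⌉₊ ≤ k ↔ n ≤ k ^ 2 := by
  rw [Nat.ceil_le, Real.sqrt_le_left (Nat.cast_nonneg k)]
  exact_mod_cast Iff.rfl

/-- The burning number of the path on n vertices equals ⌈√n⌉. -/
theorem burnNum_pathGraph (n : ℕ) (hn : 1 ≤ n) :
    burnNum (SimpleGraph.pathGraph n) = ⌈Real.sqrt n⌉₊ := by
  have h : {k | ∃ x : Fin k → Fin n, IsBurningSeq (pathGraph n) x} =
      Set.Ici ⌈√(n : ℝ)⌉₊ := by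
    ext k
    rw [Set.mem_ofPred_eq, exists_isBurningSeq_pathGraph_iff hn, Set.mem_Ici, Nat.ceil_sqrt_le_iff]
  rw [burnNum, h, csInf_Ici]
end

section
/- For every connected graph G, b(G) = min{ b(T) : T is a spanning tree of G }. -/
open SimpleGraph

/-!
A spanning subgraph only has larger distances, so `b(G) ≤ b(T)` for every spanning tree `T`.
Conversely, fix an optimal burning sequence `x` of `G` and let `t v = min_i (i + d(v, x i))` be
the round in which `v` catches fire. Every vertex that is not a source lit in its own round has
a neighbour that catches fire strictly earlier; joining each such vertex to one such neighbour
gives a forest (`t` strictly decreases along parent edges) in which every vertex reaches a source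
`x i` within `t v - i ≤ k - 1 - i` steps. Any spanning tree of `G` containing this forest is then
burned by `x` as well.
-/

namespace SimpleGraph

variable {V : Type*}

def parentGraph (par : V → V) : SimpleGraph V :=
  fromRel fun a b => par a = b

variable {par : V → V} {B : V → ℕ}

theorem parentGraph_adj {a b : V} :
    (parentGraph par).Adj a b ↔ a ≠ b ∧ (par a = b ∨ par b = a) :=
  fromRel_adj _ a b

theorem parentGraph_le {G : SimpleGraph V} (h : ∀ v, par v ≠ v → G.Adj v (par v)) :
    parentGraph par ≤ G := by
  intro a b hab
  obtain ⟨hne, rfl | rfl⟩ := parentGraph_adj.1 hab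
  · exact h a hne.symm
  · exact (h b hne).symm

section Descent

variable (hB : ∀ v, par v ≠ v → B (par v) < B v)
include hB

theorem parentGraph_adj_of_le {a b : V} (hab : (parentGraph par).Adj a b) (hle : B b ≤ B a) :
    par a = b := by
  obtain ⟨hne, h | h⟩ := parentGraph_adj.1 hab
  · exact h
  · exact absurd (h ▸ hB b (h ▸ hne)) (not_lt.2 hle)

/-- On a cycle through a vertex of maximal potential, both cycle neighbours would be its parent. -/
theorem parentGraph_isAcyclic : (parentGraph par).IsAcyclic := by
  classical
  intro u c hc
  obtain ⟨a, ha, hmax⟩ := c.support.toFinset.exists_max_image B ⟨u, by simp⟩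
  rw [List.mem_toFinset] at ha
  set c' := c.rotate a ha
  have hc' : c'.IsCycle := hc.rotate ha
  have hle : ∀ n, B (c'.getVert n) ≤ B a := fun n =>
    hmax _ (List.mem_toFinset.2 ((c.mem_support_rotate_iff a ha).1 (c'.getVert_mem_support n)))
  have hnil : ¬ c'.Nil := hc'.not_nil
  exact hc'.snd_ne_penultimate <|
    (parentGraph_adj_of_le hB (c'.adj_snd hnil) (hle 1)).symm.trans
      (parentGraph_adj_of_le hB (c'.adj_penultimate hnil).symm (hle _))

theorem exists_parentGraph_walk_to_fixed (v : V) :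
    ∃ r, par r = r ∧ ∃ w : (parentGraph par).Walk v r, w.length + B r ≤ B v := by
  by_cases hv : par v = v
  · exact ⟨v, hv, .nil, by simp⟩
  · have hlt := hB v hv
    obtain ⟨r, hr, w, hw⟩ := exists_parentGraph_walk_to_fixed (par v)
    exact ⟨r, hr, .cons (parentGraph_adj.2 ⟨Ne.symm hv, .inl rfl⟩) w, by
      rw [Walk.length_cons]; omega⟩
termination_by B v

end Descent

end SimpleGraph

namespace IsBurningSeq

variable {V : Type*} {G H : SimpleGraph V} {k : ℕ} {x : Fin k → V}

/-- Burning the vertices one per round, in any order, burns the whole graph. -/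
theorem exists_of_finite [Finite V] (G : SimpleGraph V) :
    ∃ k, ∃ x : Fin k → V, IsBurningSeq G x :=
  ⟨Nat.card V, (Finite.equivFin V).symm, fun v =>
    ⟨Finite.equivFin V v, by simp⟩⟩

theorem of_le (hx : IsBurningSeq H x) (hHG : H ≤ G) (hH : H.Connected) : IsBurningSeq G x :=
  fun v => (hx v).imp fun i hi => ((hH v (x i)).dist_anti hHG).trans hi

end IsBurningSeq

section BurnNum

variable {V : Type*} {G H : SimpleGraph V}

theorem burnNum_le {k : ℕ} {x : Fin k → V} (hx : IsBurningSeq G x) : burnNum G ≤ k :=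
  Nat.sInf_le ⟨x, hx⟩

theorem exists_isBurningSeq_burnNum [Finite V] (G : SimpleGraph V) :
    ∃ x : Fin (burnNum G) → V, IsBurningSeq G x :=
  Nat.sInf_mem (IsBurningSeq.exists_of_finite G)

theorem burnNum_le_of_le [Finite V] (hHG : H ≤ G) (hH : H.Connected) :
    burnNum G ≤ burnNum H :=
  let ⟨_, hy⟩ := exists_isBurningSeq_burnNum H
  burnNum_le (hy.of_le hHG hH)

end BurnNum

section BurnTime

variable {V : Type*} {G : SimpleGraph V} {k : ℕ} {x : Fin k → V}

/-- The round in which `v` catches fire when the sources `x` are lit one per round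
(junk value `0` when `k = 0`). -/
noncomputable def burnTime (G : SimpleGraph V) (x : Fin k → V) (v : V) : ℕ :=
  ⨅ i : Fin k, (i : ℕ) + G.dist v (x i)

theorem burnTime_le_add_dist (v : V) (i : Fin k) : burnTime G x v ≤ i + G.dist v (x i) :=
  ciInf_le (OrderBot.bddBelow _) i

theorem IsBurningSeq.burnTime_le (hx : IsBurningSeq G x) (v : V) : burnTime G x v ≤ k - 1 := by
  obtain ⟨i, hi⟩ := hx v
  have := burnTime_le_add_dist (G := G) (x := x) v i
  omega

theorem SimpleGraph.Connected.exists_source_or_exists_adj_burnTime_lt [NeZero k]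
    (hG : G.Connected) (v : V) :
    (∃ i : Fin k, x i = v ∧ i ≤ burnTime G x v) ∨
      ∃ u, G.Adj v u ∧ burnTime G x u < burnTime G x v := by
  obtain ⟨i, hi⟩ := exists_eq_ciInf_of_finite (f := fun i : Fin k => (i : ℕ) + G.dist v (x i))
  replace hi : burnTime G x v = i + G.dist v (x i) := hi.symm
  obtain ⟨p, hp⟩ := hG.exists_walk_length_eq_dist v (x i)
  by_cases hnil : p.Nil
  · exact .inl ⟨i, hnil.eq.symm, by omega⟩
  · refine .inr ⟨p.snd, p.adj_snd hnil, ?_⟩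
    have hdist := dist_le p.tail
    have hlen := p.length_tail_add_one hnil
    have := burnTime_le_add_dist (G := G) (x := x) p.snd i
    omega

end BurnTime

namespace IsBurningSeq

variable {V : Type*} {G : SimpleGraph V} {k : ℕ} {x : Fin k → V}

theorem exists_parent (hG : G.Connected) (hx : IsBurningSeq G x) :
    ∃ par : V → V,
      (∀ v, par v ≠ v → G.Adj v (par v) ∧ burnTime G x (par v) < burnTime G x v) ∧
      ∀ r, par r = r → ∃ i : Fin k, x i = r ∧ i ≤ burnTime G x r := by
  obtain ⟨i, -⟩ := hx hG.nonempty.some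
  have : NeZero k := .of_pos i.pos
  have key (v : V) : ∃ u, (u = v ∧ ∃ i : Fin k, x i = v ∧ i ≤ burnTime G x v) ∨
      (G.Adj v u ∧ burnTime G x u < burnTime G x v) := by
    rcases hG.exists_source_or_exists_adj_burnTime_lt (x := x) v with hsrc | ⟨u, hu⟩
    · exact ⟨v, .inl ⟨rfl, hsrc⟩⟩
    · exact ⟨u, .inr hu⟩
  choose par hpar using key
  refine ⟨par, fun v hv => (hpar v).resolve_left (hv ·.1), fun r hr => ?_⟩
  rcases hpar r with ⟨-, hsrc⟩ | ⟨hadj, -⟩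
  · exact hsrc
  · exact absurd rfl (hr ▸ hadj).ne

theorem exists_isTree_le (hG : G.Connected) (hx : IsBurningSeq G x) :
    ∃ T ≤ G, T.IsTree ∧ IsBurningSeq T x := by
  obtain ⟨par, hdesc, hroot⟩ := hx.exists_parent hG
  obtain ⟨T, hFT, hTG, hT⟩ := hG.exists_isTree_le_of_le_of_isAcyclic
    (parentGraph_le fun v hv => (hdesc v hv).1) (parentGraph_isAcyclic fun v hv => (hdesc v hv).2)
  refine ⟨T, hTG, hT, fun v => ?_⟩
  obtain ⟨r, hr, w, hw⟩ := exists_parentGraph_walk_to_fixed (fun v hv => (hdesc v hv).2) v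
  obtain ⟨i, rfl, hi⟩ := hroot r hr
  have hdist : T.dist v (x i) ≤ w.length := (dist_le (w.mapLe hFT)).trans_eq (w.length_mapLe hFT)
  have := hx.burnTime_le v
  exact ⟨i, by omega⟩

end IsBurningSeq

/-- The burning number of a connected graph is the minimum burning number over its
spanning trees. -/
theorem burnNum_eq_min_spanning_tree {V : Type*} [Fintype V] (G : SimpleGraph V)
    (hG : G.Connected) :
    burnNum G = sInf {m : ℕ | ∃ H : SimpleGraph V, H ≤ G ∧ H.IsTree ∧ burnNum H = m} := by
  obtain ⟨x, hx⟩ := exists_isBurningSeq_burnNum G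
  obtain ⟨T, hTG, hT, hxT⟩ := hx.exists_isTree_le hG
  have hTmem :
      burnNum T ∈ {m : ℕ | ∃ H : SimpleGraph V, H ≤ G ∧ H.IsTree ∧ burnNum H = m} :=
    ⟨T, hTG, hT, rfl⟩
  apply le_antisymm
  · refine le_csInf ⟨_, hTmem⟩ ?_
    rintro _ ⟨H, hHG, hH, rfl⟩
    exact burnNum_le_of_le hHG hH.connected
  · exact (Nat.sInf_le hTmem).trans (burnNum_le hxT)
end

section
/- Let T be a tree with exactly one vertex v of degree 2, and let T' be the tree obtained from T by smoothing v (deleting v and joining its two neighbours by an edge). Then the modified burning number b^{{v}}(T) is at most b(T'), where b^{{v}}(T) is the minimum length of a burning sequence for T in which v is additionally burned as a source in round 1. -/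
open SimpleGraph

/-- The modified burning number: the minimum k such that there is a sequence of k
sources, where additionally every vertex of U is burned as a source in round 1,
burning the whole graph after round k. -/
noncomputable def modBurnNum {V : Type*} (G : SimpleGraph V) (U : Set V) : ℕ :=
  sInf {k : ℕ | 1 ≤ k ∧ ∃ x : Fin k → V, ∀ v : V,
    (∃ i : Fin k, G.dist v (x i) ≤ k - 1 - (i : ℕ)) ∨ ∃ u ∈ U, G.dist v u ≤ k - 1}

/-- Transfer a walk in the smoothed tree `T'` back to `T`: either we get a walk in `T`
with no greater length, or we reach `v` with no greater length. -/
lemma walk_transfer {V : Type*} (T : SimpleGraph V) (v : V)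
    (T' : SimpleGraph {u : V // u ≠ v})
    (hT' : ∀ a b : {u : V // u ≠ v},
      T'.Adj a b ↔ T.Adj a b ∨ (T.Adj (a : V) v ∧ T.Adj v (b : V) ∧ (a : V) ≠ (b : V)))
    {a b : {u : V // u ≠ v}} (w : T'.Walk a b) :
    (∃ p : T.Walk (a : V) (b : V), p.length ≤ w.length) ∨
    (∃ p : T.Walk (a : V) v, p.length ≤ w.length) := by
  induction w with
  | nil => exact Or.inl ⟨SimpleGraph.Walk.nil, le_refl _⟩
  | @cons a c b h w ih =>
    rcases (hT' a c).1 h with h1 | ⟨h1, h2, h3⟩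
    · rcases ih with ⟨p, hp⟩ | ⟨p, hp⟩
      · exact Or.inl ⟨SimpleGraph.Walk.cons h1 p, by simp; omega⟩
      · exact Or.inr ⟨SimpleGraph.Walk.cons h1 p, by simp; omega⟩
    · exact Or.inr ⟨SimpleGraph.Walk.cons h1 SimpleGraph.Walk.nil, by simp⟩

/-- Transfer a path in `T` between non-`v` vertices to reachability in `T'`. -/
lemma reach_transfer {V : Type*} (T : SimpleGraph V) (v : V)
    (T' : SimpleGraph {u : V // u ≠ v})
    (hT' : ∀ a b : {u : V // u ≠ v},
      T'.Adj a b ↔ T.Adj a b ∨ (T.Adj (a : V) v ∧ T.Adj v (b : V) ∧ (a : V) ≠ (b : V))) :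
    ∀ (n : ℕ) (a b : V) (ha : a ≠ v) (hb : b ≠ v) (w : T.Walk a b), w.IsPath →
      w.length ≤ n → T'.Reachable ⟨a, ha⟩ ⟨b, hb⟩ := by
  intro n
  induction n with
  | zero =>
    intro a b ha hb w hw hlen
    cases w with
    | nil => exact SimpleGraph.Reachable.refl _
    | cons h p => simp at hlen
  | succ n ih =>
    intro a b ha hb w hw hlen
    cases w with
    | nil => exact SimpleGraph.Reachable.refl _
    | @cons _ c _ h p =>
      by_cases hc : c = v
      · cases p with
        | nil => exact absurd hc hb
        | @cons _ d _ h2 q =>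
          have h2v : T.Adj v d := hc ▸ h2
          have hav2 : T.Adj a v := hc ▸ h
          have hd : d ≠ v := h2v.ne'
          have had : a ≠ d := by
            have hnd := hw.support_nodup
            rw [SimpleGraph.Walk.support_cons, SimpleGraph.Walk.support_cons,
              List.nodup_cons] at hnd
            exact fun hh => hnd.1 (by rw [hh]; exact List.mem_cons_of_mem _ q.start_mem_support)
          have hadj : T'.Adj ⟨a, ha⟩ ⟨d, hd⟩ := (hT' _ _).2 (Or.inr ⟨hav2, h2v, had⟩)
          have hq : q.IsPath := hw.of_cons.of_cons
          have hql : q.length ≤ n := by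
            simp [SimpleGraph.Walk.length_cons] at hlen; omega
          exact hadj.reachable.trans (ih d b hd hb q hq hql)
      · have hadj : T'.Adj ⟨a, ha⟩ ⟨c, hc⟩ := (hT' _ _).2 (Or.inl h)
        have hp : p.IsPath := hw.of_cons
        have hpl : p.length ≤ n := by
          simp [SimpleGraph.Walk.length_cons] at hlen; omega
        exact hadj.reachable.trans (ih c b hc hb p hp hpl)

/-- If T is a tree with exactly one degree-2 vertex v and T' is obtained from T by
smoothing v, then the modified burning number of T with v additionally burned in round 1
is at most the burning number of T'. -/
theorem modBurnNum_le_burnNum_smoothed {V : Type*} [Fintype V] [DecidableEq V]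
    (T : SimpleGraph V) [DecidableRel T.Adj] (hT : T.IsTree)
    (v : V) (hv : T.degree v = 2) (huniq : ∀ u : V, T.degree u = 2 → u = v)
    (T' : SimpleGraph {u : V // u ≠ v})
    (hT' : ∀ a b : {u : V // u ≠ v},
      T'.Adj a b ↔ T.Adj a b ∨ (T.Adj (a : V) v ∧ T.Adj v (b : V) ∧ (a : V) ≠ (b : V))) :
    modBurnNum T {v} ≤ burnNum T' := by
  -- the subtype is nonempty
  have hne : ∃ u : V, u ≠ v := by
    have hpos : 0 < (T.neighborFinset v).card := by
      rw [← T.card_neighborFinset_eq_degree] at hv; omega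
    obtain ⟨u, hu⟩ := Finset.card_pos.mp hpos
    rw [T.mem_neighborFinset] at hu
    exact ⟨u, hu.ne'⟩
  obtain ⟨u0, hu0⟩ := hne
  set w0 : {u : V // u ≠ v} := ⟨u0, hu0⟩ with hw0
  -- the burning set of T' is nonempty
  have hSne : {k : ℕ | ∃ x : Fin k → {u : V // u ≠ v}, IsBurningSeq T' x}.Nonempty := by
    refine ⟨Fintype.card {u : V // u ≠ v}, fun _ => w0, fun a => ?_⟩
    have hcard : 0 < Fintype.card {u : V // u ≠ v} := Fintype.card_pos_iff.mpr ⟨w0⟩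
    refine ⟨⟨0, hcard⟩, ?_⟩
    simp only [Fin.val_mk, Nat.sub_zero]
    by_cases hr : T'.Reachable a w0
    · obtain ⟨p⟩ := hr
      have h1 : T'.dist a w0 ≤ p.toPath.1.length := SimpleGraph.dist_le _
      have h2 : p.toPath.1.length < Fintype.card {u : V // u ≠ v} := p.toPath.2.length_lt
      omega
    · rw [SimpleGraph.dist_eq_zero_of_not_reachable hr]; omega
  have hmem := Nat.sInf_mem hSne
  set k := burnNum T' with hk
  obtain ⟨x', hx'⟩ := hmem
  have hkk : sInf {k : ℕ | ∃ x : Fin k → {u : V // u ≠ v}, IsBurningSeq T' x} = k := rfl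
  have hk1 : 1 ≤ k := by
    obtain ⟨i, _⟩ := hx' w0
    have hi2 := i.2
    omega
  apply Nat.sInf_le
  refine ⟨hk1, fun i => (x' i : V), fun a => ?_⟩
  by_cases hav : a = v
  · exact Or.inr ⟨v, rfl, by rw [hav, SimpleGraph.dist_self]; omega⟩
  · obtain ⟨i, hi⟩ := hx' ⟨a, hav⟩
    have hreach : T'.Reachable ⟨a, hav⟩ (x' i) := by
      have hTr : T.Reachable a ((x' i : V)) := hT.isConnected.preconnected a _
      obtain ⟨p⟩ := hTr
      exact reach_transfer T v T' hT' p.toPath.1.length a _ hav (x' i).2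
        p.toPath.1 p.toPath.2 le_rfl
    obtain ⟨p, hp⟩ := hreach.exists_walk_length_eq_dist
    rcases walk_transfer T v T' hT' p with ⟨q, hq⟩ | ⟨q, hq⟩
    · refine Or.inl ⟨i, ?_⟩
      show T.dist a ((x' i : V)) ≤ k - 1 - (i : ℕ)
      have h1 : T.dist a ((x' i : V)) ≤ q.length := SimpleGraph.dist_le q
      omega
    · refine Or.inr ⟨v, rfl, ?_⟩
      have h1 : T.dist a v ≤ q.length := SimpleGraph.dist_le q
      have h2' : T'.dist ⟨a, hav⟩ (x' i) ≤ k - 1 - (i : ℕ) := hi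
      have h2 : (i : ℕ) < k := i.2
      omega
end

section
/- If T' is obtained from a tree T by deleting a set of leaves, then b(T) ≤ b(T') + 1; more generally, if T is a subtree of a tree S with V(T) ⊆ V(S) and distances in S restricted to V(T) equal distances in T, then b(T) ≤ b(S). -/
open SimpleGraph

/-!
Both parts transfer an optimal burning sequence. Deleting leaves keeps a tree connected and does
not change distances between the remaining vertices, so a burning sequence of the pruned tree
burns every remaining vertex and, with one extra idle round, every leaf through its neighbour
outside the deleted set. For an isometric subtree `T ⊆ S`, replace each source by a nearest
vertex of `T`: the image of `T` is closed under paths of `S`, so a nearest point is a gate, lying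
between the source and every vertex of `T`, and projecting a source brings it no farther from
any vertex of `T`.
-/

namespace SimpleGraph

variable {V W : Type*}

section Burning

variable {G : SimpleGraph V} {H : SimpleGraph W}

theorem IsBurningSeq.burnNum_le {k : ℕ} {x : Fin k → V} (hx : IsBurningSeq G x) :
    burnNum G ≤ k :=
  Nat.sInf_le ⟨x, hx⟩

theorem exists_isBurningSeq_burnNum [Finite V] (G : SimpleGraph V) :
    ∃ x : Fin (burnNum G) → V, IsBurningSeq G x :=
  Nat.sInf_mem (s := {k | ∃ x : Fin k → V, IsBurningSeq G x})
    ⟨Nat.card V, (Finite.equivFin V).symm, fun v => ⟨Finite.equivFin V v, by simp⟩⟩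

theorem IsBurningSeq.append_of_dist_le {k : ℕ} {x : Fin k → W} (hx : IsBurningSeq H x)
    (r : W → V) (d : ℕ) (v₀ : V) (h : ∀ v, ∃ w, ∀ y, G.dist v (r y) ≤ H.dist w y + d) :
    IsBurningSeq G (Fin.append (r ∘ x) fun _ : Fin d => v₀) := by
  intro v
  obtain ⟨w, hw⟩ := h v
  obtain ⟨i, hi⟩ := hx w
  refine ⟨Fin.castAdd d i, ?_⟩
  rw [Fin.append_left, Function.comp_apply, Fin.val_castAdd]
  have := hw (x i)
  have := i.isLt
  omega

theorem burnNum_le_add_of_dist_le [Finite W] [Nonempty V] (r : W → V) (d : ℕ)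
    (h : ∀ v, ∃ w, ∀ y, G.dist v (r y) ≤ H.dist w y + d) :
    burnNum G ≤ burnNum H + d := by
  obtain ⟨x, hx⟩ := exists_isBurningSeq_burnNum H
  exact (hx.append_of_dist_le r d (Classical.arbitrary V) h).burnNum_le

end Burning

section Leaves

variable {G : SimpleGraph V}

theorem Reachable.dist_map_le {G' : SimpleGraph W} (φ : G →g G') {u v : V}
    (h : G.Reachable u v) : G'.dist (φ u) (φ v) ≤ G.dist u v := by
  obtain ⟨p, hp⟩ := h.exists_walk_length_eq_dist
  simpa [hp] using G'.dist_le (p.map φ)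

/-- The first step of a path from `v` to `t` works, since a path cannot pass through a leaf. -/
theorem Preconnected.exists_adj_notMem_of_subsingleton_neighborSet (hG : G.Preconnected)
    {L : Set V} (hL : ∀ v ∈ L, (G.neighborSet v).Subsingleton) {t v : V} (ht : t ∉ L)
    (hv : v ∈ L) : ∃ u, G.Adj v u ∧ u ∉ L := by
  obtain ⟨p, hp⟩ := hG.exists_isPath v t
  have hnil : ¬p.Nil := Walk.not_nil_of_ne (ne_of_mem_of_not_mem hv ht)
  refine ⟨p.snd, p.adj_snd hnil, fun hsnd => ?_⟩
  refine hp.isTrail.not_mem_support_of_subsingleton_neighborSet (p.adj_snd hnil).ne.symm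
    (ne_of_mem_of_not_mem hsnd ht) (hL _ hsnd) ?_
  exact List.mem_of_mem_tail (p.snd_mem_tail_support hnil)

theorem burnNum_le_burnNum_induce_compl_add_one [Finite V] (hG : G.Connected) {L : Set V}
    (hL : ∀ v ∈ L, (G.neighborSet v).Subsingleton) (hLc : Lᶜ.Nonempty) :
    burnNum G ≤ burnNum (G.induce Lᶜ) + 1 := by
  have : Nonempty V := ⟨hLc.some⟩
  have hind : (G.induce Lᶜ).Preconnected :=
    hG.preconnected.induce_of_degree_eq_one fun v hv => hL v (not_not.mp hv)
  refine burnNum_le_add_of_dist_le Subtype.val 1 fun v => ?_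
  obtain ⟨w, hvw⟩ : ∃ w : (Lᶜ : Set V), G.dist v w ≤ 1 := by
    by_cases hv : v ∈ L
    · obtain ⟨u, hvu, hu⟩ :=
        hG.preconnected.exists_adj_notMem_of_subsingleton_neighborSet hL hLc.some_mem hv
      exact ⟨⟨u, hu⟩, (dist_eq_one_iff_adj.mpr hvu).le⟩
    · exact ⟨⟨v, hv⟩, by simp⟩
  refine ⟨w, fun y => ?_⟩
  have hwy : G.dist w y ≤ (G.induce Lᶜ).dist w y :=
    (hind w y).dist_map_le (Embedding.induce Lᶜ).toHom
  have := hG.dist_triangle (u := v) (v := w) (w := y)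
  omega

end Leaves

section Isometry

variable {G : SimpleGraph V}

def IsPathConvex (G : SimpleGraph V) (C : Set V) : Prop :=
  ∀ ⦃a b : V⦄, a ∈ C → b ∈ C → ∀ p : G.Walk a b, p.IsPath → ∀ z ∈ p.support, z ∈ C

theorem IsAcyclic.isPath_reverse_append (hG : G.IsAcyclic) {x u v : V} {p : G.Walk x u}
    {q : G.Walk x v} (hp : p.IsPath) (hq : q.IsPath) (hsnd : p.snd ≠ q.snd) :
    (p.reverse.append q).IsPath := by
  classical
  rw [Walk.isPath_def, Walk.support_append, Walk.support_reverse, List.nodup_append]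
  refine ⟨List.nodup_reverse.mpr hp.support_nodup, hq.support_nodup.sublist (List.tail_sublist _),
    ?_⟩
  rintro z hzp _ hzq rfl
  rw [List.mem_reverse] at hzp
  have hzx : z ≠ x := by
    rintro rfl
    have := hq.support_nodup
    rw [← q.cons_tail_support, List.nodup_cons] at this
    exact this.1 hzq
  have hzq' := List.mem_of_mem_tail hzq
  have hsame : p.takeUntil z hzp = q.takeUntil z hzq' := congrArg Subtype.val <|
    (hG.subsingleton_path x z).elim ⟨_, hp.takeUntil hzp⟩ ⟨_, hq.takeUntil hzq'⟩
  apply hsnd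
  rw [← Walk.snd_takeUntil hzx p hzp, ← Walk.snd_takeUntil hzx q hzq', hsame]

/-- In a tree, a nearest point `p` of a path-convex set `C` to `x` is a gate: it lies between `x`
and every vertex of `C`. Walking from `x` towards `p` also walks towards `c`, for otherwise
the two paths would join into a path from `p` to `c` through `x ∉ C`. -/
theorem IsTree.dist_le_of_isPathConvex (hG : G.IsTree) {C : Set V} (hC : G.IsPathConvex C)
    {p c : V} (hp : p ∈ C) (hc : c ∈ C) :
    ∀ x, (∀ z ∈ C, G.dist x p ≤ G.dist x z) → G.dist c p ≤ G.dist c x := by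
  have hconn := hG.connected
  intro x hmin
  induction hn : G.dist x p using Nat.strong_induction_on generalizing x with
  | _ n ih =>
  by_cases hxC : x ∈ C
  · have hxp : x = p := hconn.dist_eq_zero_iff.mp (Nat.le_zero.mp (by simpa using hmin x hxC))
    rw [hxp]
  obtain ⟨P, hP, hPlen⟩ := hconn.exists_path_of_dist x p
  obtain ⟨Q, hQ, hQlen⟩ := hconn.exists_path_of_dist x c
  have hPnil : ¬P.Nil := Walk.not_nil_of_ne (ne_of_mem_of_not_mem hp hxC).symm
  have hQnil : ¬Q.Nil := Walk.not_nil_of_ne (ne_of_mem_of_not_mem hc hxC).symm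
  by_cases hsnd : P.snd = Q.snd
  · have hPtail := Walk.length_tail_add_one hPnil
    have hap : G.dist P.snd p ≤ P.tail.length := dist_le _
    have hxa : G.dist x P.snd = 1 := dist_eq_one_iff_adj.mpr (P.adj_snd hPnil)
    have hmin' : ∀ z ∈ C, G.dist P.snd p ≤ G.dist P.snd z := by
      intro z hz
      have := hmin z hz
      have := hconn.dist_triangle (u := x) (v := P.snd) (w := z)
      omega
    calc G.dist c p ≤ G.dist c P.snd := ih _ (by omega) P.snd hmin' rfl
      _ = G.dist Q.snd c := by rw [dist_comm, hsnd]
      _ ≤ Q.tail.length := dist_le _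
      _ ≤ G.dist c x := by rw [dist_comm, ← hQlen, ← Walk.length_tail_add_one hQnil]; omega
  · exact absurd (hC hp hc _ (hG.isAcyclic.isPath_reverse_append hP hQ hsnd) x (by simp)) hxC

theorem isPathConvex_range_of_dist_eq {T : SimpleGraph V} {S : SimpleGraph W} (hT : T.Connected)
    (hS : S.IsAcyclic) (f : V → W) (hf : ∀ u w, S.dist (f u) (f w) = T.dist u w) :
    S.IsPathConvex (Set.range f) := by
  rintro _ _ ⟨u, rfl⟩ ⟨w, rfl⟩ p hp z hz
  let φ : T →g S :=
    ⟨f, fun h => dist_eq_one_iff_adj.mp ((hf _ _).trans (dist_eq_one_iff_adj.mpr h))⟩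
  obtain ⟨q, hq⟩ := hT.exists_walk_length_eq_dist u w
  have hqlen : (q.map φ).length = S.dist (f u) (f w) := by rw [Walk.length_map, hq, hf]
  have hpq : p = q.map φ := congrArg Subtype.val <|
    (hS.subsingleton_path _ _).elim ⟨p, hp⟩ ⟨_, Walk.isPath_of_length_eq_dist _ hqlen⟩
  rw [hpq, Walk.support_map, List.mem_map] at hz
  obtain ⟨a, -, rfl⟩ := hz
  exact ⟨a, rfl⟩

theorem burnNum_le_of_dist_eq [Finite V] [Finite W] {T : SimpleGraph V} {S : SimpleGraph W}
    (hT : T.Connected) (hS : S.IsTree) (f : V → W) (hf : ∀ u w, S.dist (f u) (f w) = T.dist u w) :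
    burnNum T ≤ burnNum S := by
  have : Nonempty V := hT.nonempty
  choose r hr using fun y : W => Finite.exists_min fun z : V => S.dist y (f z)
  refine burnNum_le_add_of_dist_le r 0 fun v => ⟨f v, fun y => ?_⟩
  rw [← hf, add_zero]
  exact hS.dist_le_of_isPathConvex (isPathConvex_range_of_dist_eq hT hS.isAcyclic f hf)
    ⟨r y, rfl⟩ ⟨v, rfl⟩ y (by rintro _ ⟨z, rfl⟩; exact hr y z)

end Isometry

end SimpleGraph

/-- (1) Deleting a set of leaves from a tree increases the burning number by at most 1
upon restoring them; (2) more generally, if a tree T embeds isometrically into a tree S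
then b(T) ≤ b(S). -/
theorem burnNum_delete_leaves_and_isometric :
    (∀ (V : Type) [Fintype V] [DecidableEq V] (T : SimpleGraph V),
      T.IsTree → ∀ L : Set V, (∀ v ∈ L, (T.neighborSet v).ncard = 1) →
        (Lᶜ : Set V).Nonempty →
        burnNum T ≤ burnNum (T.induce (Lᶜ : Set V)) + 1) ∧
    (∀ (V W : Type) [Fintype V] [Fintype W]
      (T : SimpleGraph V) (S : SimpleGraph W),
      T.IsTree → S.IsTree → ∀ f : V ↪ W,
        (∀ u w : V, S.dist (f u) (f w) = T.dist u w) →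
        burnNum T ≤ burnNum S) := by
  refine ⟨fun V _ _ T hT L hL hLc => ?_, fun V W _ _ T S hT hS f hf => ?_⟩
  · refine burnNum_le_burnNum_induce_compl_add_one hT.connected (fun v hv => ?_) hLc
    obtain ⟨a, ha⟩ := Set.ncard_eq_one.mp (hL v hv)
    rw [ha]
    exact Set.subsingleton_singleton
  · exact burnNum_le_of_dist_eq hT.connected hS f hf
end
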